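/- Fix an index i. For any real numbers α, β with α² + β² ≠ 0 and any ε ∈ ℝ, every complex eigenvalue of the (n−1)×(n−1) matrix F^i(ε) = α·L^{R_i} + β·P^i(ε) is real; that is, the spectrum of F^i(ε) over ℂ is contained in ℝ. -/
import Mathlib


/- Context: the paper's matrices have size `n ≥ 2`; here the size is `n + 1` with `1 ≤ n`. -/

open Matrix BigOperators

/-- The Laplacian of a weighted adjacency matrix: `L(M) = D - M` where `D` is the
diagonal matrix of row sums. -/
def lap {m : ℕ} (M : Matrix (Fin m) (Fin m) ℝ) : Matrix (Fin m) (Fin m) ℝ :=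
  Matrix.diagonal (fun j => ∑ k, M j k) - M

/-- `A^i(ε)`: multiply the `i`-th row and `i`-th column of `A` by `ε`. -/
def pert {m : ℕ} (A : Matrix (Fin (m + 1)) (Fin (m + 1)) ℝ) (i : Fin (m + 1)) (ε : ℝ) :
    Matrix (Fin (m + 1)) (Fin (m + 1)) ℝ :=
  Matrix.of fun j k => if j = i ∨ k = i then ε * A j k else A j k

/-- `ã_i`: the `i`-th column of `A` with its `i`-th entry deleted. -/
def atilde {m : ℕ} (A : Matrix (Fin (m + 1)) (Fin (m + 1)) ℝ) (i : Fin (m + 1)) : Fin m → ℝ :=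
  fun j => A (i.succAbove j) i

/-- `A^{R_i}`: delete row `i` and column `i` of `A`. -/
def Ared {m : ℕ} (A : Matrix (Fin (m + 1)) (Fin (m + 1)) ℝ) (i : Fin (m + 1)) :
    Matrix (Fin m) (Fin m) ℝ :=
  A.submatrix i.succAbove i.succAbove

/-- `P^i(ε) = L^{R_i} + ε·diag(ã_i) + ε·ã_i·𝟙ᵀ`. -/
def Pmat {m : ℕ} (A : Matrix (Fin (m + 1)) (Fin (m + 1)) ℝ) (i : Fin (m + 1)) (ε : ℝ) :
    Matrix (Fin m) (Fin m) ℝ :=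
  lap (Ared A i) + ε • Matrix.diagonal (atilde A i)
    + ε • Matrix.vecMulVec (atilde A i) (fun _ => 1)

/-- An eigenvalue of a Hermitian matrix is real. -/
lemma herm_eig_real {m : ℕ} {M : Matrix (Fin m) (Fin m) ℂ} (hM : M.IsHermitian)
    {μ : ℂ} {x : Fin m → ℂ} (hx : x ≠ 0) (h : M.mulVec x = μ • x) : μ.im = 0 := by
  have hs : (star x ⬝ᵥ x : ℂ) = ((∑ j, Complex.normSq (x j) : ℝ) : ℂ) := by
    simp [dotProduct, Complex.mul_conj']
    simp [Complex.normSq_eq_conj_mul_self, mul_comm]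
  have hsne : (star x ⬝ᵥ x : ℂ) ≠ 0 := by
    rw [hs]
    obtain ⟨j, hj⟩ := Function.ne_iff.1 hx
    have : (0:ℝ) < ∑ j, Complex.normSq (x j) :=
      Finset.sum_pos' (fun k _ => Complex.normSq_nonneg _)
        ⟨j, Finset.mem_univ j, Complex.normSq_pos.2 hj⟩
    exact_mod_cast this.ne'
  have hq : star x ⬝ᵥ M.mulVec x = μ * (star x ⬝ᵥ x) := by
    rw [h]; simp [dotProduct, Finset.mul_sum]
    exact Finset.sum_congr rfl fun k _ => by ring
  have hconj : (starRingEnd ℂ) (star x ⬝ᵥ M.mulVec x) = star x ⬝ᵥ M.mulVec x := by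
    calc (starRingEnd ℂ) (star x ⬝ᵥ M.mulVec x)
        = star (star x ⬝ᵥ M.mulVec x) := rfl
      _ = star (M.mulVec x) ⬝ᵥ star (star x) := by rw [star_dotProduct_star]
      _ = (star x ᵥ* Mᴴ) ⬝ᵥ x := by rw [star_mulVec, star_star]
      _ = (star x ᵥ* M) ⬝ᵥ x := by rw [hM.eq]
      _ = star x ⬝ᵥ M.mulVec x := by rw [← dotProduct_mulVec]
  rw [hq, _root_.map_mul] at hconj
  have hsconj : (starRingEnd ℂ) (star x ⬝ᵥ x) = star x ⬝ᵥ x := by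
    rw [hs]; exact Complex.conj_ofReal _
  rw [hsconj] at hconj
  have hμc : (starRingEnd ℂ) μ = μ := mul_right_cancel₀ hsne hconj
  have := congrArg Complex.im hμc
  simpa using by linarith [Complex.conj_im μ, this]

/-- The key similarity: a nonzero eigenvalue of `(L(C^R)+diag(c̃)+c̃𝟙ᵀ)ᵀ` (written out
componentwise) lifts to an eigenvector of the full Laplacian `lap C`. -/
lemma lift_eig (n : ℕ) (C : Matrix (Fin (n+1)) (Fin (n+1)) ℝ) (i : Fin (n+1)) (μ : ℂ)
    (hμ0 : μ ≠ 0)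
    (hCs : ∀ p q, C p q = C q p)
    (y : Fin n → ℂ) (hy0 : y ≠ 0)
    (hy : ∀ j : Fin n, ((∑ r, C (i.succAbove j) (i.succAbove r) : ℝ) : ℂ) * y j
        - (∑ k, ((C (i.succAbove k) (i.succAbove j) : ℝ) : ℂ) * y k)
        + ((C (i.succAbove j) i : ℝ) : ℂ) * y j
        + (∑ k, ((C (i.succAbove k) i : ℝ) : ℂ) * y k) = μ * y j) :
    ∃ z : Fin (n+1) → ℂ, z ≠ 0 ∧ ((lap C).map Complex.ofReal) *ᵥ z = μ • z := by
  set S : ℂ := ∑ k, ((C (i.succAbove k) i : ℝ) : ℂ) * y k with hS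
  obtain ⟨t, hμt⟩ : ∃ t : ℂ, μ * t = -S := ⟨-S / μ, by field_simp [mul_comm]⟩
  set z : Fin (n+1) → ℂ := fun p => t + Fin.insertNth (α := fun _ => ℂ) i 0 y p with hz
  have hSsym : S = ∑ j, ((C i (i.succAbove j) : ℝ):ℂ) * y j :=
    Finset.sum_congr rfl fun k _ => by rw [hCs]
  refine ⟨z, ?_, ?_⟩
  · intro h
    have hzi : z i = 0 := congrFun h i
    have hti : t = 0 := by simpa [hz] using hzi
    apply hy0
    funext j
    have := congrFun h (i.succAbove j)
    simpa [hz, hti] using this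
  · funext p
    have hstep : (((lap C).map Complex.ofReal) *ᵥ z) p = ∑ q, ((lap C p q : ℝ):ℂ) * z q := by
      simp [Matrix.mulVec, dotProduct]
    rw [hstep, Fin.sum_univ_succAbove (fun q => ((lap C p q : ℝ):ℂ) * z q) i]
    rcases eq_or_ne p i with rfl | hp
    · have l1 : lap C p p = (∑ q, C p q) - C p p := by simp [lap]
      have l2 : ∀ j, lap C p (p.succAbove j) = - C p (p.succAbove j) := by
        intro j; simp [lap, Matrix.diagonal_apply, (Fin.succAbove_ne p j).symm]
      simp only [l1, l2, hz, Fin.insertNth_apply_same, Fin.insertNth_apply_succAbove,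
        Pi.smul_apply, smul_eq_mul, add_zero]
      push_cast
      rw [Fin.sum_univ_succAbove (fun q => ((C p q : ℝ):ℂ)) p]
      simp only [neg_mul, mul_add, Finset.sum_add_distrib, Finset.sum_neg_distrib,
        ← Finset.sum_mul]
      linear_combination hSsym - hμt
    · obtain ⟨j, rfl⟩ := Fin.exists_succAbove_eq hp |>.imp fun a ha => ha
      have l1 : lap C (i.succAbove j) i = - C (i.succAbove j) i := by
        simp [lap, Matrix.diagonal_apply, Fin.succAbove_ne i j]
      have l2 : ∀ k, lap C (i.succAbove j) (i.succAbove k)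
          = (if j = k then ∑ q, C (i.succAbove j) q else 0) - C (i.succAbove j) (i.succAbove k) := by
        intro k
        simp [lap, Matrix.diagonal_apply, Fin.succAbove_right_inj]
      have hy' := hy j
      have hsym2 : (∑ k, ((C (i.succAbove k) (i.succAbove j) : ℝ):ℂ) * y k)
          = ∑ k, ((C (i.succAbove j) (i.succAbove k) : ℝ):ℂ) * y k :=
        Finset.sum_congr rfl fun k _ => by rw [hCs]
      rw [hsym2] at hy'
      push_cast at hy'
      simp only [l1, l2, hz, Fin.insertNth_apply_same, Fin.insertNth_apply_succAbove,
        Pi.smul_apply, smul_eq_mul, add_zero]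
      push_cast
      simp only [apply_ite Complex.ofReal, Complex.ofReal_zero]
      simp only [sub_mul, ite_mul, zero_mul, Finset.sum_sub_distrib, Finset.sum_ite_eq,
        Finset.mem_univ, if_true, neg_mul, mul_add, Finset.sum_add_distrib,
        Finset.sum_neg_distrib, ← Finset.sum_mul]
      push_cast
      rw [Fin.sum_univ_succAbove (fun q => ((C (i.succAbove j) q : ℝ):ℂ)) i]
      linear_combination hy' - hμt

/-- For any `α, β` with `α² + β² ≠ 0` and any `ε`, every complex
eigenvalue of `F^i(ε) = α·L^{R_i} + β·P^i(ε)` is real. -/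
theorem stmt4 (n : ℕ) (hn : 1 ≤ n) (A : Matrix (Fin (n + 1)) (Fin (n + 1)) ℝ)
    (hsymm : A.IsSymm) (hnonneg : ∀ j k, 0 ≤ A j k) (hdiag : ∀ j, A j j = 0)
    (i : Fin (n + 1)) (α β : ℝ) (hαβ : α ^ 2 + β ^ 2 ≠ 0) (ε : ℝ) :
    ∀ μ ∈ spectrum ℂ ((α • lap (Ared A i) + β • Pmat A i ε).map Complex.ofReal),
      μ.im = 0 := by
  intro μ hμ
  by_contra him
  have hμ0 : μ ≠ 0 := fun h => him (by simp [h])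
  set C : Matrix (Fin (n+1)) (Fin (n+1)) ℝ := Matrix.of fun j k =>
    if j = i ∨ k = i then (β*ε) * A j k else (α+β) * A j k with hCdef
  have hA : ∀ p q : Fin (n+1), A p q = A q p := fun p q =>
    (congrFun (congrFun hsymm p) q).symm
  have hCs : ∀ p q, C p q = C q p := by
    intro p q
    simp only [hCdef, Matrix.of_apply, or_comm]
    rw [hA p q]
  -- rewrite the matrix in the `C` form
  have hFG : α • lap (Ared A i) + β • Pmat A i ε =
      lap (Ared C i) + Matrix.diagonal (atilde C i)
        + Matrix.vecMulVec (atilde C i) (fun _ => 1) := by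
    ext j k
    simp only [hCdef, lap, Pmat, Ared, atilde, Matrix.add_apply, Matrix.sub_apply,
      Matrix.smul_apply, Matrix.diagonal_apply, Matrix.vecMulVec_apply, Matrix.submatrix_apply,
      Matrix.of_apply, Fin.succAbove_ne, or_self, if_false, eq_self_iff_true, or_true, if_true,
      smul_eq_mul, Finset.mul_sum]
    rw [← Finset.mul_sum]
    split_ifs with h <;> ring
  rw [hFG] at hμ
  set G : Matrix (Fin n) (Fin n) ℝ := lap (Ared C i) + Matrix.diagonal (atilde C i)
      + Matrix.vecMulVec (atilde C i) (fun _ => 1) with hG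
  -- extract an eigenvector of the transpose
  rw [spectrum.mem_iff] at hμ
  have hdet : ((algebraMap ℂ (Matrix (Fin n) (Fin n) ℂ) μ - G.map Complex.ofReal)ᵀ).det = 0 := by
    rw [Matrix.det_transpose]
    by_contra hd
    exact hμ ((Matrix.isUnit_iff_isUnit_det _).2 (isUnit_iff_ne_zero.2 hd))
  obtain ⟨y, hy0, hy1⟩ := Matrix.exists_mulVec_eq_zero_iff.2 hdet
  have hy2 : (G.map Complex.ofReal)ᵀ *ᵥ y = μ • y := by
    have halg : (algebraMap ℂ (Matrix (Fin n) (Fin n) ℂ) μ) = μ • (1 : Matrix (Fin n) (Fin n) ℂ) :=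
      Algebra.algebraMap_eq_smul_one μ
    rw [halg, Matrix.transpose_sub, Matrix.transpose_smul, Matrix.transpose_one,
      Matrix.sub_mulVec, Matrix.smul_mulVec, Matrix.one_mulVec, sub_eq_zero] at hy1
    exact hy1.symm
  -- componentwise form
  have hy : ∀ j : Fin n, ((∑ r, C (i.succAbove j) (i.succAbove r) : ℝ) : ℂ) * y j
      - (∑ k, ((C (i.succAbove k) (i.succAbove j) : ℝ) : ℂ) * y k)
      + ((C (i.succAbove j) i : ℝ) : ℂ) * y j
      + (∑ k, ((C (i.succAbove k) i : ℝ) : ℂ) * y k) = μ * y j := by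
    intro j
    have h := congrFun hy2 j
    simp only [hG, Matrix.mulVec, dotProduct, Matrix.transpose_apply, Matrix.map_apply,
      Matrix.add_apply, Matrix.sub_apply, lap, Matrix.diagonal_apply, Matrix.vecMulVec_apply,
      atilde, Ared, Matrix.submatrix_apply, Pi.smul_apply, smul_eq_mul, mul_one] at h
    push_cast at h
    simp only [apply_ite Complex.ofReal, Complex.ofReal_zero] at h
    simp only [sub_mul, add_mul, ite_mul, zero_mul, Finset.sum_add_distrib,
      Finset.sum_sub_distrib, Finset.sum_ite_eq' Finset.univ j] at h
    simpa using h
  -- lift to the full Laplacian, which is Hermitian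
  obtain ⟨z, hz0, hzeig⟩ := lift_eig n C i μ hμ0 hCs y hy0 hy
  have hherm : ((lap C).map Complex.ofReal).IsHermitian := by
    rw [Matrix.IsHermitian]
    ext p q
    have hlapsym : lap C q p = lap C p q := by
      simp only [lap, Matrix.sub_apply, Matrix.diagonal_apply]
      rw [hCs q p]
      congr 1
      split_ifs with h1 h2 h2
      · rw [h1]
      · exact absurd h1.symm h2
      · exact absurd h2.symm h1
      · rfl
    simp [Matrix.conjTranspose_apply, Matrix.map_apply, Complex.conj_ofReal, hlapsym]
  exact him (herm_eig_real hherm hz0 hzeig)
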